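/- For every integer n ≥ 2, the number of cyclic permutations of length n avoiding all three cyclic patterns [1234], [1342], and [1423] equals n−1; that is, #Av_n([1234],[1342],[1423]) = n−1. -/

import Mathlib

/-!
Inserting a new smallest entry cyclically into `[123]` gives exactly `[1234]`, `[1342]` and
`[1423]`, so `[σ]` avoids these three patterns iff every cyclic occurrence of `[123]` in `σ` has
the value `0` as its `1`. Rotate `σ` to start with `0`. Every third position lies cyclically after
two adjacent positions, and with values `a, b` there the condition forces `b = a - 1` or
`(a, b) = (1, n - 1)`. So after its `0`, `σ` runs down cyclically through `1, …, n - 1`: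
`σ = 0, m, m - 1, …, 1, n - 1, …, m + 1` for a unique `m ∈ {1, …, n - 1}`.
-/

/-- A sequence `σ` of length `n` (with distinct values) contains the pattern `π`
of length `k` if some subsequence of `σ` is order isomorphic to `π`. -/
def ContainsPat {n k : ℕ} (σ : Fin n → Fin n) (π : Fin k → ℕ) : Prop :=
  ∃ f : Fin k → Fin n, StrictMono f ∧ ∀ i j : Fin k, π i < π j ↔ σ (f i) < σ (f j)

/-- The rotation of the sequence `σ` starting at position `r`. -/
def rotSeq {n : ℕ} (σ : Fin n → Fin n) (r : Fin n) : Fin n → Fin n :=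
  fun i => σ (i + r)

/-- The cyclic permutation `[σ]` contains the cyclic pattern `[π]` if some
rotation of `σ` contains `π` linearly. -/
def CycContains {n k : ℕ} (σ : Fin n → Fin n) (π : Fin k → ℕ) : Prop :=
  ∃ r : Fin n, ContainsPat (rotSeq σ r) π

/-- The cyclic permutation `[σ]` avoids the cyclic pattern `[π]`. -/
def CycAvoids {n k : ℕ} (σ : Fin n → Fin n) (π : Fin k → ℕ) : Prop :=
  ¬ CycContains σ π

/-- The cyclic permutation `[σ]`, i.e. the set of all rotations of `σ`. -/
def CycClass {n : ℕ} (σ : Fin n → Fin n) : Set (Fin n → Fin n) :=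
  Set.range (rotSeq σ)

/-- The set of cyclic permutations (rotation classes) of length `n` all of whose
representatives are permutations and which satisfy the (rotation-invariant)
predicate `P`. -/
def AvClasses (n : ℕ) (P : (Fin n → Fin n) → Prop) : Set (Set (Fin n → Fin n)) :=
  { C | ∃ σ : Equiv.Perm (Fin n), C = CycClass ⇑σ ∧ P ⇑σ }

/-- The cyclic descent number: the number of indices `i` (mod `n`) with
`σ i > σ (i+1)`. -/
def cdes {n : ℕ} (σ : Fin n → Fin n) : ℕ :=
  (Finset.univ.filter fun i : Fin n =>
    σ ⟨(↑i + 1) % n, Nat.mod_lt _ i.pos⟩ < σ i).card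

/-- The cyclic peak number: the number of indices `i` (mod `n`) with
`σ (i-1) < σ i > σ (i+1)`. -/
def cpk {n : ℕ} (σ : Fin n → Fin n) : ℕ :=
  (Finset.univ.filter fun i : Fin n =>
    σ ⟨(↑i + (n - 1)) % n, Nat.mod_lt _ i.pos⟩ < σ i ∧
    σ ⟨(↑i + 1) % n, Nat.mod_lt _ i.pos⟩ < σ i).card

namespace Fin

variable {n : ℕ}

theorem sbtw_add_right {a b c : Fin n} (h : sbtw a b c) (t : Fin n) :
    sbtw (a + t) (b + t) (c + t) := by
  rw [Fin.sbtw_iff] at h ⊢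
  simp only [Fin.lt_def, Fin.val_add_eq_ite] at h ⊢
  split_ifs <;> omega

theorem sbtw_add_one [NeZero n] {x k : Fin n} (h₀ : k ≠ x) (h₁ : k ≠ x + 1) :
    sbtw x (x + 1) k := by
  have hn : 1 < n := by
    by_contra! h
    have : Subsingleton (Fin n) := Fin.subsingleton_iff_le_one.2 h
    exact h₀ (Subsingleton.elim _ _)
  rw [Fin.sbtw_iff]
  simp only [Fin.lt_def, Fin.val_add_eq_ite, ne_eq, Fin.ext_iff, Fin.val_one',
    Nat.mod_eq_of_lt hn] at h₀ h₁ ⊢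
  split_ifs at h₁ ⊢ <;> omega

end Fin

theorem StrictMono.sbtw {m n : ℕ} {f : Fin m → Fin n} (hf : StrictMono f) {a b c : Fin m}
    (h : sbtw a b c) : sbtw (f a) (f b) (f c) := by
  simpa only [Fin.sbtw_iff, hf.lt_iff_lt] using h

theorem ContainsPat.of_strictMono_comp {n k : ℕ} {σ : Fin n → Fin n} {π : Fin k → ℕ}
    (f : Fin k → Fin n) (hf : StrictMono f) (q : Fin k → Fin k) (hq : Function.Surjective q)
    (hπ : StrictMono (π ∘ q)) (hσ : StrictMono (σ ∘ f ∘ q)) : ContainsPat σ π := by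
  refine ⟨f, hf, fun i j => ?_⟩
  obtain ⟨i, rfl⟩ := hq i
  obtain ⟨j, rfl⟩ := hq j
  exact hπ.lt_iff_lt.trans hσ.lt_iff_lt.symm

/-- Position `j` of the word `0, m, m - 1, …, 1, n - 1, n - 2, …, m + 1`. -/
def canonicalVal (n m j : ℕ) : ℕ :=
  if j = 0 then 0 else if j ≤ m then m + 1 - j else n + m - j

theorem canonicalVal_lt {n : ℕ} (m : Fin n) {j : ℕ} (hj : j < n) : canonicalVal n m j < n := by
  have := m.isLt
  unfold canonicalVal
  split_ifs <;> omega

theorem canonicalVal_canonicalVal {n m j : ℕ} (hj : j < n) :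
    canonicalVal n m (canonicalVal n m j) = j := by
  unfold canonicalVal
  split_ifs <;> omega

theorem canonicalVal_one {n m : ℕ} (hm : m ≠ 0) : canonicalVal n m 1 = m := by
  rw [canonicalVal, if_neg one_ne_zero, if_pos (by omega)]
  omega

def canonical {n : ℕ} (m : Fin n) : Equiv.Perm (Fin n) :=
  Function.Involutive.toPerm (fun i => ⟨canonicalVal n m i, canonicalVal_lt m i.isLt⟩)
    fun i => Fin.ext (canonicalVal_canonicalVal i.isLt)

theorem canonical_apply_val {n : ℕ} (m i : Fin n) :
    (canonical m i).val = canonicalVal n m i := rfl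

section

variable {n : ℕ} [NeZero n]

theorem rotSeq_zero (σ : Fin n → Fin n) : rotSeq σ 0 = σ :=
  funext fun i => congrArg σ (add_zero i)

theorem rotSeq_rotSeq (σ : Fin n → Fin n) (s t : Fin n) :
    rotSeq (rotSeq σ s) t = rotSeq σ (t + s) :=
  funext fun i => congrArg σ (add_assoc i t s)

theorem cycClass_rotSeq (σ : Fin n → Fin n) (t : Fin n) :
    CycClass (rotSeq σ t) = CycClass σ := by
  ext τ
  constructor
  · rintro ⟨r, rfl⟩
    exact ⟨r + t, (rotSeq_rotSeq σ t r).symm⟩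
  · rintro ⟨r, rfl⟩
    exact ⟨r - t, by rw [rotSeq_rotSeq, sub_add_cancel]⟩

theorem Equiv.Perm.eq_of_cycClass_eq {σ τ : Equiv.Perm (Fin n)} (hσ : σ 0 = 0) (hτ : τ 0 = 0)
    (h : CycClass σ = CycClass τ) : σ = τ := by
  obtain ⟨r, hr⟩ : ⇑τ ∈ CycClass σ := h ▸ ⟨0, rotSeq_zero τ⟩
  have hr0 : r = 0 := σ.injective (by simpa [rotSeq, hσ, hτ] using congrFun hr 0)
  rw [hr0, rotSeq_zero] at hr
  exact Equiv.coe_fn_injective hr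

def CycAscentsStartAtZero (σ : Fin n → Fin n) : Prop :=
  ∀ a b c, sbtw a b c → σ a < σ b → σ b < σ c → σ a = 0

theorem CycAscentsStartAtZero.rotSeq {σ : Fin n → Fin n} (hσ : CycAscentsStartAtZero σ)
    (t : Fin n) : CycAscentsStartAtZero (rotSeq σ t) :=
  fun _ _ _ h => hσ _ _ _ (Fin.sbtw_add_right h t)

theorem CycAscentsStartAtZero.cycAvoids {k : ℕ} {σ : Fin n → Fin n}
    (hσ : CycAscentsStartAtZero σ) {π : Fin k → ℕ} {i j l m : Fin k} (hijl : sbtw i j l)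
    (hmi : π m < π i) (hij : π i < π j) (hjl : π j < π l) : CycAvoids σ π := by
  rintro ⟨r, f, hf, hπ⟩
  have h0 : _root_.rotSeq σ r (f i) = 0 :=
    hσ _ _ _ (Fin.sbtw_add_right (hf.sbtw hijl) r) ((hπ i j).1 hij) ((hπ j l).1 hjl)
  exact Fin.not_lt_zero _ (h0 ▸ (hπ m i).1 hmi)

theorem CycAscentsStartAtZero.cycAvoids_1234 {σ : Fin n → Fin n}
    (hσ : CycAscentsStartAtZero σ) : CycAvoids σ ![1,2,3,4] :=
  hσ.cycAvoids (i := 1) (j := 2) (l := 3) (m := 0) (Fin.sbtw_iff.2 (by decide))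
    (by decide) (by decide) (by decide)

theorem CycAscentsStartAtZero.cycAvoids_1342 {σ : Fin n → Fin n}
    (hσ : CycAscentsStartAtZero σ) : CycAvoids σ ![1,3,4,2] :=
  hσ.cycAvoids (i := 3) (j := 1) (l := 2) (m := 0) (Fin.sbtw_iff.2 (by decide))
    (by decide) (by decide) (by decide)

theorem CycAscentsStartAtZero.cycAvoids_1423 {σ : Fin n → Fin n}
    (hσ : CycAscentsStartAtZero σ) : CycAvoids σ ![1,4,2,3] :=
  hσ.cycAvoids (i := 2) (j := 3) (l := 1) (m := 0) (Fin.sbtw_iff.2 (by decide))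
    (by decide) (by decide) (by decide)

theorem cycAscentsStartAtZero_of_cycAvoids (σ : Equiv.Perm (Fin n))
    (h1234 : CycAvoids σ ![1,2,3,4]) (h1342 : CycAvoids σ ![1,3,4,2])
    (h1423 : CycAvoids σ ![1,4,2,3]) : CycAscentsStartAtZero σ := by
  intro a b c habc hab hbc
  by_contra ha
  obtain ⟨p, hp⟩ := σ.surjective 0
  have hpos : ∀ x, σ x ≠ 0 → 0 < x - p := fun x hx =>
    Fin.pos_iff_ne_zero.2 (sub_ne_zero.2 fun h => hx (h ▸ hp))
  have hsorted : StrictMono (rotSeq σ p ∘ ![0, a - p, b - p, c - p]) := by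
    refine Fin.strictMono_iff_lt_succ.2 fun i => ?_
    fin_cases i <;> simp [rotSeq, hp, Fin.pos_iff_ne_zero, ha, hab, hbc]
  have hA := hpos a ha
  have hB := hpos b (Fin.pos_iff_ne_zero.1 ((Fin.zero_le _).trans_lt hab))
  have hC := hpos c (Fin.pos_iff_ne_zero.1 ((Fin.zero_le _).trans_lt (hab.trans hbc)))
  have hcyc : sbtw (a - p) (b - p) (c - p) := by
    simpa only [sub_eq_add_neg] using Fin.sbtw_add_right habc (-p)
  -- In `rotSeq σ p` the values increase along the positions `0, a - p, b - p, c - p`; how these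
  -- are ordered as positions decides which of the three patterns occurs.
  rcases Fin.sbtw_iff.1 hcyc with ⟨hAB, hBC⟩ | ⟨hBC, hCA⟩ | ⟨hCA, hAB⟩
  · refine h1234 ⟨p, .of_strictMono_comp ![0, a - p, b - p, c - p] ?_ id Function.surjective_id
      (by decide) hsorted⟩
    simp [strictMono_vecCons, hA, hAB, hBC]
  · refine h1342 ⟨p, .of_strictMono_comp ![0, b - p, c - p, a - p] ?_ ![0, 3, 1, 2] (by decide)
      (by decide) ?_⟩
    · simp [strictMono_vecCons, hB, hBC, hCA]
    · convert hsorted using 2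
      ext i
      fin_cases i <;> rfl
  · refine h1423 ⟨p, .of_strictMono_comp ![0, c - p, a - p, b - p] ?_ ![0, 2, 3, 1] (by decide)
      (by decide) ?_⟩
    · simp [strictMono_vecCons, hC, hCA, hAB]
    · convert hsorted using 2
      ext i
      fin_cases i <;> rfl

theorem CycAscentsStartAtZero.val_add_one {σ : Equiv.Perm (Fin n)}
    (hσ : CycAscentsStartAtZero σ) {x : Fin n} (hx : σ x ≠ 0) (hx' : σ (x + 1) ≠ 0) :
    (σ (x + 1)).val + 1 = (σ x).val ∨ (σ x).val = 1 ∧ (σ (x + 1)).val = n - 1 := by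
  have hA := Fin.val_ne_zero_iff.2 hx
  have hB := Fin.val_ne_zero_iff.2 hx'
  have hAn := (σ x).isLt
  have hBn := (σ (x + 1)).isLt
  have hAB : (σ x).val ≠ (σ (x + 1)).val := by
    refine Fin.val_ne_iff.2 (σ.injective.ne (left_ne_add.2 fun h1 => hx ?_))
    have : Subsingleton (Fin n) := Fin.subsingleton_iff_le_one.2 (Fin.one_eq_zero_iff.1 h1).le
    exact Subsingleton.elim _ _
  have hthird : ∀ v (hv : v < n), v ≠ (σ x).val → v ≠ (σ (x + 1)).val →
      sbtw x (x + 1) (σ.symm ⟨v, hv⟩) := fun v hv h h' =>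
    Fin.sbtw_add_one (fun e => h (congrArg Fin.val (σ.symm_apply_eq.1 e)))
      (fun e => h' (congrArg Fin.val (σ.symm_apply_eq.1 e)))
  have hval : ∀ v (hv : v < n), σ (σ.symm ⟨v, hv⟩) = ⟨v, hv⟩ :=
    fun _ _ => σ.apply_symm_apply _
  rcases Nat.lt_or_gt_of_ne hAB with hlt | hgt
  · right
    constructor
    · by_contra h1
      have h0 := hσ _ _ _
        (sbtw_cyclic_right (hthird ((σ x).val - 1) (by omega) (by omega) (by omega)))
        (by simp only [hval, Fin.lt_def]; omega) (Fin.lt_def.2 hlt)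
      rw [hval, Fin.ext_iff, Fin.val_mk, Fin.val_zero] at h0
      omega
    · by_contra h1
      exact hx (hσ _ _ _ (hthird ((σ (x + 1)).val + 1) (by omega) (by omega) (by omega))
        (Fin.lt_def.2 hlt) (by simp only [hval, Fin.lt_def]; omega))
  · left
    by_contra h1
    exact hx' (hσ _ _ _
      (sbtw_cyclic_left (hthird ((σ (x + 1)).val + 1) (by omega) (by omega) (by omega)))
      (by simp only [hval, Fin.lt_def]; omega) (by simp only [hval, Fin.lt_def]; omega))

theorem canonical_apply_zero (m : Fin n) : canonical m 0 = 0 := rfl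

theorem canonical_apply_one {m : Fin n} (hm : m ≠ 0) : canonical m 1 = m := by
  have hn : 1 < n := by have := Fin.val_ne_zero_iff.2 hm; omega
  ext
  rw [canonical_apply_val, Fin.val_one', Nat.mod_eq_of_lt hn,
    canonicalVal_one (Fin.val_ne_zero_iff.2 hm)]

theorem cycAscentsStartAtZero_canonical (m : Fin n) : CycAscentsStartAtZero (canonical m) := by
  intro a b c habc hab hbc
  rw [Fin.sbtw_iff] at habc
  simp only [Fin.lt_def, Fin.ext_iff, canonical_apply_val, Fin.val_zero] at habc hab hbc ⊢
  unfold canonicalVal at hab hbc ⊢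
  split_ifs at hab hbc ⊢ <;> omega

theorem CycAscentsStartAtZero.eq_canonical {σ : Equiv.Perm (Fin n)}
    (hσ : CycAscentsStartAtZero σ) (h0 : σ 0 = 0) : σ = canonical (σ 1) := by
  have hne : ∀ {x}, x ≠ 0 → σ x ≠ 0 := fun hx => h0 ▸ σ.injective.ne hx
  suffices h : ∀ i (hi : i < n), (σ ⟨i, hi⟩).val = canonicalVal n (σ 1) i from
    Equiv.ext fun i => Fin.ext (h i i.isLt)
  intro i
  induction i with
  | zero => exact fun _ => congrArg Fin.val h0
  | succ i ih =>
    intro hi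
    rcases i with _ | i
    · have h1 : (⟨1, hi⟩ : Fin n) = 1 := Fin.ext (by simp [Nat.mod_eq_of_lt hi])
      rw [h1, canonicalVal_one]
      exact Fin.val_ne_zero_iff.2 (hne (Fin.one_eq_zero_iff.not.2 (by omega)))
    · have hx : (⟨i + 1, by omega⟩ : Fin n) + 1 = ⟨i + 1 + 1, hi⟩ :=
        Fin.ext (Fin.val_add_one_of_lt' hi)
      have hA := hne (x := ⟨i + 1, by omega⟩) (by simp [Fin.ext_iff])
      have hB := hne (x := ⟨i + 1 + 1, hi⟩) (by simp [Fin.ext_iff])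
      have hstep := hσ.val_add_one hA (hx ▸ hB)
      rw [hx, ih (by omega)] at hstep
      have := Fin.val_ne_zero_iff.2 hB
      have := (σ 1).isLt
      simp only [canonicalVal, Nat.add_one_ne_zero, if_false] at hstep ⊢
      split_ifs at hstep ⊢ <;> omega

theorem injOn_cycClass_canonical :
    Set.InjOn (fun m : Fin n => CycClass (canonical m)) {m | m ≠ 0} := fun m hm m' hm' h => by
  rw [← canonical_apply_one hm, ← canonical_apply_one hm',
    Equiv.Perm.eq_of_cycClass_eq (canonical_apply_zero m) (canonical_apply_zero m') h]

theorem CycAscentsStartAtZero.exists_cycClass_eq_canonical (hn : 1 < n)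
    {σ : Equiv.Perm (Fin n)} (hσ : CycAscentsStartAtZero σ) : ∃ m ≠ 0, CycClass σ = CycClass (canonical m) := by
  obtain ⟨p, hp⟩ := σ.surjective 0
  -- `⇑τ = rotSeq σ p` starts with the value `0`
  set τ := (Equiv.addRight p).trans σ
  have hτ0 : τ 0 = 0 := by simp [τ, hp]
  have hτ : CycAscentsStartAtZero τ := hσ.rotSeq p
  refine ⟨τ 1, fun h => Fin.one_eq_zero_iff.not.2 hn.ne' (τ.injective (h.trans hτ0.symm)), ?_⟩
  rw [← hτ.eq_canonical hτ0, ← cycClass_rotSeq σ p]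
  rfl

end

theorem card_av_1234_1342_1423 (n : ℕ) (hn : 2 ≤ n) :
    (AvClasses n fun σ => CycAvoids σ ![1,2,3,4] ∧ CycAvoids σ ![1,3,4,2] ∧ CycAvoids σ ![1,4,2,3]).ncard = n - 1 := by
  have : NeZero n := ⟨by omega⟩
  have hAv : (AvClasses n fun σ =>
      CycAvoids σ ![1,2,3,4] ∧ CycAvoids σ ![1,3,4,2] ∧ CycAvoids σ ![1,4,2,3]) =
      (fun m => CycClass (canonical m)) '' {m | m ≠ 0} := by
    ext C
    constructor
    · rintro ⟨σ, rfl, h1234, h1342, h1423⟩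
      obtain ⟨m, hm, hσ⟩ := (cycAscentsStartAtZero_of_cycAvoids σ h1234 h1342 h1423)
        |>.exists_cycClass_eq_canonical hn
      exact ⟨m, hm, hσ.symm⟩
    · rintro ⟨m, -, rfl⟩
      have hm := cycAscentsStartAtZero_canonical m
      exact ⟨canonical m, rfl, hm.cycAvoids_1234, hm.cycAvoids_1342, hm.cycAvoids_1423⟩
  rw [hAv, injOn_cycClass_canonical.ncard_image, ← Set.compl_singleton_eq,
    Set.ncard_compl, Set.ncard_singleton, Nat.card_eq_fintype_card, Fintype.card_fin]
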